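/- Corollary 1: For every d×d complex density matrix ρ (d ≥ 2), the three quantities S_D, S_X, S_I satisfy (a) S_I² ≤ 1 + S_D² + S_X², and (b) if moreover S_D² + S_X² ≤ 1/(d−1) and d is odd, then √d · S_I ≤ √(d−1) + √(S_D² + S_X²). -/

import Mathlib

open Matrix
open scoped ComplexOrder

noncomputable section

/-- A density matrix: positive semidefinite with unit trace. -/
def IsDensityMatrix {d : ℕ} (ρ : Matrix (Fin d) (Fin d) ℂ) : Prop :=
  ρ.PosSemidef ∧ ρ.trace = 1

/-- The diagonal part `D` of the decomposition `d·ρ = 𝟙 + D + X + I`. -/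
def Dmat (d : ℕ) (ρ : Matrix (Fin d) (Fin d) ℂ) : Matrix (Fin d) (Fin d) ℂ :=
  Matrix.diagonal fun k => (d : ℂ) * ρ k k - 1

/-- The real off-diagonal part `X`: `X_kl = d·Re(ρ_kl)` for `k ≠ l`, zero diagonal. -/
def Xmat (d : ℕ) (ρ : Matrix (Fin d) (Fin d) ℂ) : Matrix (Fin d) (Fin d) ℂ :=
  Matrix.of fun k l => if k = l then 0 else (((d : ℝ) * (ρ k l).re : ℝ) : ℂ)

/-- The imaginary off-diagonal part `I`: `I_kl = i·d·Im(ρ_kl)` for `k ≠ l`, zero diagonal. -/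
def Imat (d : ℕ) (ρ : Matrix (Fin d) (Fin d) ℂ) : Matrix (Fin d) (Fin d) ℂ :=
  Matrix.of fun k l => if k = l then 0 else Complex.I * (((d : ℝ) * (ρ k l).im : ℝ) : ℂ)

/-- `S_D = √(Tr(D²)/d)`. -/
def SD (d : ℕ) (ρ : Matrix (Fin d) (Fin d) ℂ) : ℝ :=
  Real.sqrt ((Dmat d ρ * Dmat d ρ).trace.re / d)

/-- `S_X = √(Tr(X²)/d)`. -/
def SX (d : ℕ) (ρ : Matrix (Fin d) (Fin d) ℂ) : ℝ :=
  Real.sqrt ((Xmat d ρ * Xmat d ρ).trace.re / d)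

/-- `S_I = √(Tr(I²)/d)`. -/
def SI (d : ℕ) (ρ : Matrix (Fin d) (Fin d) ℂ) : ℝ :=
  Real.sqrt ((Imat d ρ * Imat d ρ).trace.re / d)

/-!
Split `ρ = R + K` into its entrywise real part `R` and `K = i·Im ρ`. For Hermitian `ρ`, `K` is
Hermitian and skew-symmetric, `ρᵀ = R - K`, `I = d·K` and `D + X = d·R - 𝟙`; hence
`S_I² = d ∑ λₖ²` for the eigenvalues `λₖ` of `K`, while `S_D² + S_X² = d Tr R² - 1` because `D`
and `X` are trace-orthogonal. Both `R + K = ρ` and `R - K = ρᵀ` are positive semidefinite, so in an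
eigenbasis of `K` the diagonal entries `rₖ` of `R` satisfy `|λₖ| ≤ rₖ`, `∑ rₖ = 1` and
`∑ rₖ² ≤ Tr R²`; this gives (a). For odd `d` the skew-symmetric `K` is singular, so some
`λₖ₀ = 0`, and Cauchy–Schwarz over the other `d - 1` indices gives
`(d rₖ₀ - 1)² ≤ (d - 1)(S_D² + S_X²)`; with `d² ∑ λₖ² ≤ d² (Tr R² - rₖ₀²)` this yields (b).
-/

open Finset

namespace Matrix

variable {n : Type*}

section Spectral

variable {𝕜 : Type*} [Fintype n] [RCLike 𝕜]

lemma IsHermitian.re_trace_mul_self_nonneg {A : Matrix n n 𝕜} (hA : A.IsHermitian) :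
    0 ≤ RCLike.re (A * A).trace := by
  have h := (posSemidef_conjTranspose_mul_self A).trace_nonneg
  rw [hA.eq] at h
  exact (RCLike.nonneg_iff.mp h).1

lemma IsHermitian.sum_sq_re_diag_le {A : Matrix n n 𝕜} (hA : A.IsHermitian) :
    ∑ k, RCLike.re (A k k) ^ 2 ≤ RCLike.re (A * A).trace := by
  have hsq : ∀ k l, RCLike.re (A k l * A l k) = ‖A k l‖ ^ 2 := fun k l => by
    rw [← hA.apply l k, RCLike.star_def, RCLike.mul_conj, ← RCLike.ofReal_pow, RCLike.ofReal_re]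
  calc ∑ k, RCLike.re (A k k) ^ 2 ≤ ∑ k, ‖A k k‖ ^ 2 :=
        sum_le_sum fun k _ => sq_le_sq' (abs_le.mp (RCLike.abs_re_le_norm _)).1
          (abs_le.mp (RCLike.abs_re_le_norm _)).2
    _ ≤ ∑ k, ∑ l, ‖A k l‖ ^ 2 :=
        sum_le_sum fun k _ => single_le_sum (f := fun l => ‖A k l‖ ^ 2) (fun _ _ => by positivity)
          (mem_univ k)
    _ = RCLike.re (A * A).trace := by
        simp only [trace, diag_apply, mul_apply, map_sum, hsq]

variable [DecidableEq n]

lemma trace_star_mul_mul_of_mem_unitaryGroup {U : Matrix n n 𝕜} (hU : U ∈ unitaryGroup n 𝕜)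
    (A : Matrix n n 𝕜) : (star U * A * U).trace = A.trace := by
  rw [trace_mul_cycle, Unitary.mul_star_self_of_mem hU, one_mul]

lemma star_mul_mul_mul_star_mul_mul {U : Matrix n n 𝕜} (hU : U ∈ unitaryGroup n 𝕜)
    (A B : Matrix n n 𝕜) : star U * A * U * (star U * B * U) = star U * (A * B) * U := by
  rw [Matrix.mul_assoc (star U * A), ← Matrix.mul_assoc U, ← Matrix.mul_assoc U,
    Unitary.mul_star_self_of_mem hU, Matrix.one_mul]
  simp only [Matrix.mul_assoc]

lemma IsHermitian.trace_mul_self {K : Matrix n n 𝕜} (hK : K.IsHermitian) :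
    (K * K).trace = ∑ k, (hK.eigenvalues k : 𝕜) ^ 2 := by
  have hU := hK.eigenvectorUnitary.2
  rw [← trace_star_mul_mul_of_mem_unitaryGroup hU, ← star_mul_mul_mul_star_mul_mul hU,
    ← Unitary.conjStarAlgAut_star_apply (S := 𝕜), hK.conjStarAlgAut_star_eigenvectorUnitary,
    diagonal_mul_diagonal, trace_diagonal]
  simp [sq]

lemma IsHermitian.exists_abs_eigenvalues_le {R K : Matrix n n 𝕜} (hR : R.IsHermitian)
    (hK : K.IsHermitian) (hplus : (R + K).PosSemidef) (hminus : (R - K).PosSemidef) :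
    ∃ r : n → ℝ, (∀ k, |hK.eigenvalues k| ≤ r k) ∧ ∑ k, r k = RCLike.re R.trace ∧
      ∑ k, r k ^ 2 ≤ RCLike.re (R * R).trace := by
  set U : Matrix n n 𝕜 := (hK.eigenvectorUnitary : Matrix n n 𝕜)
  have hU : U ∈ unitaryGroup n 𝕜 := hK.eigenvectorUnitary.2
  have hdiag : star U * K * U = diagonal (RCLike.ofReal ∘ hK.eigenvalues) := by
    rw [← Unitary.conjStarAlgAut_star_apply (S := 𝕜)]
    exact hK.conjStarAlgAut_star_eigenvectorUnitary
  have hconj_nonneg {M : Matrix n n 𝕜} (hM : M.PosSemidef) (k : n) :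
      0 ≤ RCLike.re ((star U * M * U) k k) := by
    have := (hM.conjTranspose_mul_mul_same U).diag_nonneg (i := k)
    exact (RCLike.nonneg_iff.mp (star_eq_conjTranspose U ▸ this)).1
  set W := star U * R * U
  have hW : W.IsHermitian := by
    simpa only [W, star_eq_conjTranspose] using isHermitian_conjTranspose_mul_mul U hR
  refine ⟨fun k => RCLike.re (W k k), fun k => abs_le.mpr ⟨?_, ?_⟩, ?_, ?_⟩
  · have := hconj_nonneg hplus k
    rw [Matrix.mul_add, Matrix.add_mul, hdiag] at this
    simpa [neg_le_iff_add_nonneg'] using this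
  · have := hconj_nonneg hminus k
    rw [Matrix.mul_sub, Matrix.sub_mul, hdiag] at this
    simpa using this
  · rw [← trace_star_mul_mul_of_mem_unitaryGroup hU R, trace, map_sum]
    rfl
  · rw [← trace_star_mul_mul_of_mem_unitaryGroup hU (R * R),
      ← star_mul_mul_mul_star_mul_mul hU]
    exact hW.sum_sq_re_diag_le

lemma det_eq_zero_of_transpose_eq_neg {R : Type*} [CommRing R] [IsAddTorsionFree R]
    {A : Matrix n n R} (hodd : Odd (Fintype.card n)) (hA : Aᵀ = -A) : A.det = 0 := by
  have h := congrArg det hA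
  rw [det_transpose, det_neg, hodd.neg_one_pow, neg_one_mul] at h
  exact self_eq_neg.mp h

lemma IsHermitian.exists_eigenvalues_eq_zero_of_transpose_eq_neg {K : Matrix n n 𝕜}
    (hK : K.IsHermitian) (hodd : Odd (Fintype.card n)) (hskew : Kᵀ = -K) :
    ∃ k, hK.eigenvalues k = 0 := by
  have h := hK.det_eq_prod_eigenvalues
  rw [det_eq_zero_of_transpose_eq_neg hodd hskew, eq_comm, prod_eq_zero_iff] at h
  obtain ⟨k, -, hk⟩ := h
  exact ⟨k, by exact_mod_cast hk⟩

end Spectral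

def entrywiseRe (ρ : Matrix n n ℂ) : Matrix n n ℂ :=
  ρ.map fun z => (z.re : ℂ)

def entrywiseIm (ρ : Matrix n n ℂ) : Matrix n n ℂ :=
  ρ.map fun z => Complex.I * (z.im : ℂ)

lemma entrywiseRe_add_entrywiseIm (ρ : Matrix n n ℂ) : ρ.entrywiseRe + ρ.entrywiseIm = ρ := by
  ext k l
  simp [entrywiseRe, entrywiseIm, mul_comm Complex.I, Complex.re_add_im]

lemma trace_entrywiseRe [Fintype n] (ρ : Matrix n n ℂ) :
    ρ.entrywiseRe.trace = (ρ.trace.re : ℂ) := by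
  simp [entrywiseRe, trace]

namespace IsHermitian

variable {ρ : Matrix n n ℂ}

lemma re_apply_swap (hρ : ρ.IsHermitian) (k l : n) : (ρ l k).re = (ρ k l).re := by
  rw [← hρ.apply l k, Complex.star_def, Complex.conj_re]

lemma im_apply_swap (hρ : ρ.IsHermitian) (k l : n) : (ρ l k).im = -(ρ k l).im := by
  rw [← hρ.apply l k, Complex.star_def, Complex.conj_im]

lemma im_apply_self (hρ : ρ.IsHermitian) (k : n) : (ρ k k).im = 0 := by
  linarith [hρ.im_apply_swap k k]

lemma transpose_eq_entrywiseRe_sub_entrywiseIm (hρ : ρ.IsHermitian) :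
    ρᵀ = ρ.entrywiseRe - ρ.entrywiseIm := by
  ext k l
  apply Complex.ext <;> simp [entrywiseRe, entrywiseIm, hρ.re_apply_swap l k, hρ.im_apply_swap l k]

lemma isHermitian_entrywiseRe (hρ : ρ.IsHermitian) : ρ.entrywiseRe.IsHermitian := by
  ext k l
  simp [entrywiseRe, hρ.re_apply_swap k l]

lemma isHermitian_entrywiseIm (hρ : ρ.IsHermitian) : ρ.entrywiseIm.IsHermitian := by
  ext k l
  apply Complex.ext <;> simp [entrywiseIm, hρ.im_apply_swap k l]

lemma transpose_entrywiseIm (hρ : ρ.IsHermitian) : ρ.entrywiseImᵀ = -ρ.entrywiseIm := by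
  ext k l
  simp [entrywiseIm, hρ.im_apply_swap l k]

end IsHermitian

end Matrix

section DensityMatrix

variable {d : ℕ} {ρ : Matrix (Fin d) (Fin d) ℂ}

lemma Imat_eq_smul_entrywiseIm (hρ : ρ.IsHermitian) : Imat d ρ = (d : ℂ) • ρ.entrywiseIm := by
  ext k l
  by_cases h : k = l
  · subst h
    simp [Imat, entrywiseIm, hρ.im_apply_self]
  · simp [Imat, entrywiseIm, h]
    ring

lemma Dmat_add_Xmat (hρ : ρ.IsHermitian) : Dmat d ρ + Xmat d ρ = (d : ℂ) • ρ.entrywiseRe - 1 := by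
  ext k l
  by_cases h : k = l
  · subst h
    apply Complex.ext <;> simp [Dmat, Xmat, entrywiseRe, hρ.im_apply_self]
  · simp [Dmat, Xmat, entrywiseRe, h]

lemma trace_Dmat_mul_Xmat : (Dmat d ρ * Xmat d ρ).trace = 0 := by
  simp [trace, Dmat, Xmat, diagonal_mul]

lemma isHermitian_Dmat (hρ : ρ.IsHermitian) : (Dmat d ρ).IsHermitian := by
  ext k l
  by_cases h : k = l
  · subst h
    apply Complex.ext <;> simp [Dmat, hρ.im_apply_self]
  · simp [Dmat, h, Ne.symm h]

lemma isHermitian_Xmat (hρ : ρ.IsHermitian) : (Xmat d ρ).IsHermitian := by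
  ext k l
  by_cases h : k = l
  · simp [Xmat, h]
  · simp [Xmat, h, Ne.symm h, hρ.re_apply_swap k l]

lemma SI_sq (hρ : ρ.IsHermitian) :
    SI d ρ ^ 2 = d * ∑ k, hρ.isHermitian_entrywiseIm.eigenvalues k ^ 2 := by
  have htrace : (Imat d ρ * Imat d ρ).trace.re
      = d ^ 2 * ∑ k, hρ.isHermitian_entrywiseIm.eigenvalues k ^ 2 := by
    rw [Imat_eq_smul_entrywiseIm hρ, smul_mul_smul_comm, trace_smul,
      hρ.isHermitian_entrywiseIm.trace_mul_self]
    simp [sq]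
  rw [SI, Real.sq_sqrt (by rw [htrace]; positivity), htrace]
  rcases Nat.eq_zero_or_pos d with rfl | hd
  · simp
  · field_simp

lemma SD_sq_add_SX_sq (hρ : ρ.IsHermitian) (htr : ρ.trace = 1) :
    SD d ρ ^ 2 + SX d ρ ^ 2 = d * (ρ.entrywiseRe * ρ.entrywiseRe).trace.re - 1 := by
  have hd : (d : ℝ) ≠ 0 := by
    rintro h
    obtain rfl : d = 0 := by exact_mod_cast h
    simp at htr
  have htrace : (Dmat d ρ * Dmat d ρ).trace + (Xmat d ρ * Xmat d ρ).trace
      = d ^ 2 * (ρ.entrywiseRe * ρ.entrywiseRe).trace - d := by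
    have h := congrArg (fun A => (A * A).trace) (Dmat_add_Xmat hρ)
    simp only [Matrix.add_mul, Matrix.mul_add, Matrix.sub_mul, Matrix.mul_sub, trace_add,
      trace_sub, Matrix.smul_mul, Matrix.mul_smul, Matrix.one_mul,
      Matrix.mul_one, trace_smul, trace_one, trace_entrywiseRe, htr, trace_mul_comm (Xmat d ρ),
      trace_Dmat_mul_Xmat, add_zero, zero_add, smul_eq_mul, Complex.one_re, Complex.ofReal_one,
      Fintype.card_fin] at h
    linear_combination h
  have hD : 0 ≤ (Dmat d ρ * Dmat d ρ).trace.re := (isHermitian_Dmat hρ).re_trace_mul_self_nonneg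
  have hX : 0 ≤ (Xmat d ρ * Xmat d ρ).trace.re := (isHermitian_Xmat hρ).re_trace_mul_self_nonneg
  rw [SD, SX, Real.sq_sqrt (div_nonneg hD d.cast_nonneg),
    Real.sq_sqrt (div_nonneg hX d.cast_nonneg)]
  have := congrArg Complex.re htrace
  simp only [Complex.add_re, Complex.sub_re, ← Complex.ofReal_natCast, ← Complex.ofReal_pow,
    Complex.re_ofReal_mul, Complex.ofReal_re] at this
  field_simp
  linear_combination this

end DensityMatrix

section SumOfSquares

variable {ι : Type*}

lemma sum_sq_le_sum_sq_of_abs_le {x r : ι → ℝ} (h : ∀ k, |x k| ≤ r k) (s : Finset ι) :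
    ∑ k ∈ s, x k ^ 2 ≤ ∑ k ∈ s, r k ^ 2 :=
  sum_le_sum fun k _ => sq_le_sq' (abs_le.mp (h k)).1 (abs_le.mp (h k)).2

variable [Fintype ι] [DecidableEq ι]

lemma sq_card_mul_sub_one_le {r : ι → ℝ} (hsum : ∑ k, r k = 1) (k₀ : ι) :
    (Fintype.card ι * r k₀ - 1) ^ 2 ≤
      (Fintype.card ι - 1) * (Fintype.card ι * ∑ k, r k ^ 2 - 1) := by
  have hcard : (#(univ.erase k₀) : ℝ) = Fintype.card ι - 1 := by
    rw [card_erase_of_mem (mem_univ k₀), card_univ, Nat.cast_pred (Fintype.card_pos_iff.mpr ⟨k₀⟩)]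
  have hcs := sq_sum_le_card_mul_sum_sq (s := univ.erase k₀) (f := r)
  rw [sum_erase_eq_sub (mem_univ k₀), sum_erase_eq_sub (mem_univ k₀), hsum, hcard] at hcs
  nlinarith [mul_le_mul_of_nonneg_left hcs (Fintype.card ι).cast_nonneg]

lemma sq_card_mul_sum_sq_le {x r : ι → ℝ} {a : ℝ} (hx : ∀ k, |x k| ≤ r k) (hsum : ∑ k, r k = 1)
    (hr : Fintype.card ι * ∑ k, r k ^ 2 ≤ 1 + a) {k₀ : ι} (hk₀ : x k₀ = 0)
    (ha : (Fintype.card ι - 1) * a ≤ 1) :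
    (Fintype.card ι : ℝ) ^ 2 * ∑ k, x k ^ 2 ≤ (√(Fintype.card ι - 1) + √a) ^ 2 := by
  set c : ℝ := (Fintype.card ι : ℝ)
  have hc : 1 ≤ c := Nat.one_le_cast.mpr (Fintype.card_pos_iff.mpr ⟨k₀⟩)
  have ha₀ : 0 ≤ a := by
    have := sq_sum_le_card_mul_sum_sq (s := univ) (f := r)
    rw [hsum, card_univ] at this
    linarith
  set s := √((c - 1) * a)
  have hs : s ^ 2 = (c - 1) * a := Real.sq_sqrt (by positivity)
  have hs₁ : s ≤ 1 := Real.sqrt_le_one.mpr ha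
  have hvar : (c * r k₀ - 1) ^ 2 ≤ s ^ 2 := by
    have := sq_card_mul_sub_one_le hsum k₀
    nlinarith
  have hr₀ : (1 - s) ^ 2 ≤ (c * r k₀) ^ 2 := by
    have := abs_le_of_sq_le_sq' hvar (Real.sqrt_nonneg _)
    exact pow_le_pow_left₀ (by linarith) (by linarith) 2
  have hx₀ : ∑ k, x k ^ 2 ≤ ∑ k, r k ^ 2 - r k₀ ^ 2 := by
    rw [← add_sum_erase _ _ (mem_univ k₀), hk₀, ← sum_erase_eq_sub (mem_univ k₀)]
    simpa using sum_sq_le_sum_sq_of_abs_le hx (univ.erase k₀)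
  have hsplit : (√(c - 1) + √a) ^ 2 = c - 1 + a + 2 * s := by
    rw [add_sq, Real.sq_sqrt (by linarith), Real.sq_sqrt ha₀,
      show s = √(c - 1) * √a from Real.sqrt_mul (by linarith) a]
    ring
  rw [hsplit]
  nlinarith [mul_le_mul_of_nonneg_left hx₀ (sq_nonneg c)]

end SumOfSquares

theorem full_bounds_general (d : ℕ) (ρ : Matrix (Fin d) (Fin d) ℂ)
    (hρ : IsDensityMatrix ρ) :
    SI d ρ ^ 2 ≤ 1 + SD d ρ ^ 2 + SX d ρ ^ 2 ∧
    (Odd d → SD d ρ ^ 2 + SX d ρ ^ 2 ≤ 1 / ((d : ℝ) - 1) →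
      Real.sqrt d * SI d ρ ≤ Real.sqrt ((d : ℝ) - 1)
        + Real.sqrt (SD d ρ ^ 2 + SX d ρ ^ 2)) := by
  obtain ⟨hpsd, htr⟩ := hρ
  have hherm : ρ.IsHermitian := hpsd.isHermitian
  have hK := hherm.isHermitian_entrywiseIm
  obtain ⟨r, hr, hsum, hsq⟩ := hherm.isHermitian_entrywiseRe.exists_abs_eigenvalues_le hK
    (by rwa [entrywiseRe_add_entrywiseIm])
    (by rw [← hherm.transpose_eq_entrywiseRe_sub_entrywiseIm]; exact hpsd.transpose)
  simp only [trace_entrywiseRe, htr, Complex.one_re, RCLike.re_to_complex,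
    Complex.ofReal_one] at hsum
  rw [RCLike.re_to_complex] at hsq
  have hrP : (d : ℝ) * ∑ k, r k ^ 2 ≤ 1 + (SD d ρ ^ 2 + SX d ρ ^ 2) := by
    rw [SD_sq_add_SX_sq hherm htr]
    linarith [mul_le_mul_of_nonneg_left hsq d.cast_nonneg]
  refine ⟨?_, fun hodd hsmall => ?_⟩
  · rw [SI_sq hherm]
    linarith [mul_le_mul_of_nonneg_left (sum_sq_le_sum_sq_of_abs_le hr univ) d.cast_nonneg]
  · obtain ⟨k₀, hk₀⟩ := hK.exists_eigenvalues_eq_zero_of_transpose_eq_neg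
      (by rwa [Fintype.card_fin]) hherm.transpose_entrywiseIm
    have hd₁ : (0 : ℝ) ≤ d - 1 := sub_nonneg.mpr (Nat.one_le_cast.mpr hodd.pos)
    have hb := sq_card_mul_sum_sq_le hr hsum (by rwa [Fintype.card_fin]) hk₀
      (by rw [Fintype.card_fin, mul_comm]; exact mul_le_of_le_div₀ zero_le_one hd₁ hsmall)
    rw [Fintype.card_fin] at hb
    have hSI : 0 ≤ SI d ρ := Real.sqrt_nonneg _
    refine (pow_le_pow_iff_left₀ (mul_nonneg (Real.sqrt_nonneg _) hSI) (by positivity)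
      two_ne_zero).mp ?_
    rw [mul_pow, SI_sq hherm, Real.sq_sqrt d.cast_nonneg]
    linarith

/-- **Corollary 1.** For every `d×d` density matrix (`d ≥ 2`):
(a) `S_I² ≤ 1 + S_D² + S_X²`, and (b) if `d` is odd and `S_D² + S_X² ≤ 1/(d−1)`,
then `√d · S_I ≤ √(d−1) + √(S_D² + S_X²)`. -/
theorem full_bounds (d : ℕ) (hd : 2 ≤ d) (ρ : Matrix (Fin d) (Fin d) ℂ)
    (hρ : IsDensityMatrix ρ) :
    SI d ρ ^ 2 ≤ 1 + SD d ρ ^ 2 + SX d ρ ^ 2 ∧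
    (Odd d → SD d ρ ^ 2 + SX d ρ ^ 2 ≤ 1 / ((d : ℝ) - 1) →
      Real.sqrt d * SI d ρ ≤ Real.sqrt ((d : ℝ) - 1)
        + Real.sqrt (SD d ρ ^ 2 + SX d ρ ^ 2)) :=
  full_bounds_general d ρ hρ
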